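/- Completeness of JD_CS with respect to finitary models: for every axiomatically appropriate constant specification CS for JD and every formula A, if A is not derivable in the Hilbert system JD_CS then there exists a finitary Fitting model M for JD_CS and a world w in M such that M,w ⊮ A. -/

import Mathlib

namespace JustificationLogic

/-- Justification terms: constants, variables, application, sum, and proof checker `!`. -/
inductive Term : Type
  | const : ℕ → Term
  | var : ℕ → Term
  | app : Term → Term → Term
  | sum : Term → Term → Term
  | bang : Term → Term
  deriving DecidableEq

/-- Formulas of justification logic: atoms, negation, implication, and `t : A`. -/
inductive Formula : Type
  | atom : ℕ → Formula
  | neg : Formula → Formula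
  | impl : Formula → Formula → Formula
  | just : Term → Formula → Formula
  deriving DecidableEq

/-- Disjunction, defined classically: `A ∨ B := ¬A → B`. -/
def Formula.or (A B : Formula) : Formula := (Formula.neg A).impl B

/-- Falsum, defined as the negation of a propositional tautology. -/
def Formula.falsum : Formula := Formula.neg ((Formula.atom 0).impl (Formula.atom 0))

/-- Number of symbols of a term. -/
def Term.size : Term → ℕ
  | .const _ => 1
  | .var _ => 1
  | .app s t => s.size + t.size + 1
  | .sum s t => s.size + t.size + 1
  | .bang t => t.size + 1

/-- Number of symbols of a formula. -/
def Formula.size : Formula → ℕ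
  | .atom _ => 1
  | .neg A => A.size + 1
  | .impl A B => A.size + B.size + 1
  | .just t A => t.size + A.size + 1

/-- An explicit numerical code for terms (an injective Gödel numbering). -/
def Term.code : Term → ℕ
  | .const n => Nat.pair 0 n
  | .var n => Nat.pair 1 n
  | .app s t => Nat.pair 2 (Nat.pair s.code t.code)
  | .sum s t => Nat.pair 3 (Nat.pair s.code t.code)
  | .bang t => Nat.pair 4 t.code

/-- An explicit numerical code for formulas (an injective Gödel numbering). -/
def Formula.code : Formula → ℕ
  | .atom n => Nat.pair 0 n
  | .neg A => Nat.pair 1 A.code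
  | .impl A B => Nat.pair 2 (Nat.pair A.code B.code)
  | .just t A => Nat.pair 3 (Nat.pair t.code A.code)

/-- Substitution of terms for term variables. -/
def Term.subst (σ : ℕ → Term) : Term → Term
  | .const n => .const n
  | .var n => σ n
  | .app s t => .app (s.subst σ) (t.subst σ)
  | .sum s t => .sum (s.subst σ) (t.subst σ)
  | .bang t => .bang (t.subst σ)

/-- Simultaneous substitution of terms for term variables and formulas for atoms. -/
def Formula.subst (σ : ℕ → Term) (τ : ℕ → Formula) : Formula → Formula
  | .atom n => τ n
  | .neg A => .neg (A.subst σ τ)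
  | .impl A B => .impl (A.subst σ τ) (B.subst σ τ)
  | .just t A => .just (t.subst σ) (A.subst σ τ)

/-- `towerT c n = !ⁿc`. -/
def towerT (c : Term) : ℕ → Term
  | 0 => c
  | n + 1 => Term.bang (towerT c n)

/-- `towerF c A n = !ⁿ⁻¹c : ⋯ : !c : c : A` (and `A` for `n = 0`), so that
`(towerT c n) : (towerF c A n)` is the `n`-th formula produced by the rule (AN!). -/
def towerF (c : Term) (A : Formula) : ℕ → Formula
  | 0 => A
  | n + 1 => Formula.just (towerT c n) (towerF c A n)

/-- The axioms of the justification logics considered, with switches `hd`, `ht`, `h4`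
for the axioms (jd), (jt), (j4).  The propositional part (A1) is given by three
standard Hilbert-style schemes axiomatizing classical propositional logic. -/
inductive Ax (hd ht h4 : Bool) : Formula → Prop
  | k (A B : Formula) : Ax hd ht h4 (A.impl (B.impl A))
  | s (A B C : Formula) :
      Ax hd ht h4 ((A.impl (B.impl C)).impl ((A.impl B).impl (A.impl C)))
  | dn (A B : Formula) :
      Ax hd ht h4 (((A.neg).impl (B.neg)).impl (B.impl A))
  | a2 (t s : Term) (A B : Formula) :
      Ax hd ht h4 ((Formula.just t (A.impl B)).impl
        ((Formula.just s A).impl (Formula.just (Term.app t s) B)))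
  | a3 (t s : Term) (A : Formula) :
      Ax hd ht h4 (((Formula.just t A).or (Formula.just s A)).impl
        (Formula.just (Term.sum t s) A))
  | jd (t : Term) : hd = true →
      Ax hd ht h4 ((Formula.just t Formula.falsum).impl Formula.falsum)
  | jt (t : Term) (A : Formula) : ht = true →
      Ax hd ht h4 ((Formula.just t A).impl A)
  | j4 (t : Term) (A : Formula) : h4 = true →
      Ax hd ht h4 ((Formula.just t A).impl
        (Formula.just (Term.bang t) (Formula.just t A)))

/-- Axioms of the respective logics. -/
def AxJ : Formula → Prop := Ax false false false
def AxJT : Formula → Prop := Ax false true false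
def AxJD : Formula → Prop := Ax true false false
def AxJ4 : Formula → Prop := Ax false false true
def AxJD4 : Formula → Prop := Ax true false true
def AxLP : Formula → Prop := Ax false true true

/-- `CS` is a constant specification for the logic with axioms `Axm`:
every member of `CS` is of the form `c : A` with `c` a constant and `A` an axiom. -/
def ConstSpec (Axm : Formula → Prop) (CS : Set Formula) : Prop :=
  ∀ F ∈ CS, ∃ (c : ℕ) (A : Formula), F = Formula.just (Term.const c) A ∧ Axm A

/-- `CS` is axiomatically appropriate for axioms `Axm`:
for every axiom `A` there is a constant `c` with `c : A ∈ CS`. -/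
def AxApprop (Axm : Formula → Prop) (CS : Set Formula) : Prop :=
  ∀ A : Formula, Axm A → ∃ c : ℕ, Formula.just (Term.const c) A ∈ CS

/-- `CS` is schematic: the set of axioms justified by a given constant consists of
axiom schemes, i.e. it is closed under simultaneous substitution of terms for term
variables and formulas for atomic propositions. -/
def Schematic (CS : Set Formula) : Prop :=
  ∀ (c : ℕ) (A : Formula), Formula.just (Term.const c) A ∈ CS →
    ∀ (σ : ℕ → Term) (τ : ℕ → Formula),
      Formula.just (Term.const c) (A.subst σ τ) ∈ CS

/-- `CS` is decidable: some computable function decides membership in `CS`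
(via the explicit Gödel numbering of formulas). -/
def DecidableCS (CS : Set Formula) : Prop :=
  ∃ C : ℕ → Bool, Computable C ∧ ∀ F : Formula, F ∈ CS ↔ C F.code = true

/-- Hilbert-style derivability with the iterated axiom necessitation rule (AN!):
from `c : A ∈ CS` infer `!ⁿc : !ⁿ⁻¹c : ⋯ : !c : c : A` for every `n ≥ 0`. -/
inductive DerivB (Axm : Formula → Prop) (CS : Set Formula) : Formula → Prop
  | ax {A : Formula} : Axm A → DerivB Axm CS A
  | mp {A B : Formula} : DerivB Axm CS (A.impl B) → DerivB Axm CS A → DerivB Axm CS B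
  | an (c : ℕ) (A : Formula) (n : ℕ) :
      Formula.just (Term.const c) A ∈ CS →
      DerivB Axm CS (Formula.just (towerT (Term.const c) n) (towerF (Term.const c) A n))

/-- Hilbert-style derivability with the simple axiom necessitation rule (AN):
from `c : A ∈ CS` infer `c : A`. -/
inductive DerivS (Axm : Formula → Prop) (CS : Set Formula) : Formula → Prop
  | ax {A : Formula} : Axm A → DerivS Axm CS A
  | mp {A B : Formula} : DerivS Axm CS (A.impl B) → DerivS Axm CS A → DerivS Axm CS B
  | an (c : ℕ) (A : Formula) :
      Formula.just (Term.const c) A ∈ CS →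
      DerivS Axm CS (Formula.just (Term.const c) A)

/-- A structure for Fitting models: a nonempty set of worlds, an accessibility
relation, an evidence relation and a valuation. -/
structure Model : Type 1 where
  World : Type
  nonempty : Nonempty World
  R : World → World → Prop
  E : Term → Formula → World → Prop
  val : ℕ → World → Prop

/-- The satisfaction relation `M, w ⊩ A`. -/
def Sat (M : Model) : Formula → M.World → Prop
  | .atom n, w => M.val n w
  | .neg A, w => ¬ Sat M A w
  | .impl A B, w => Sat M A w → Sat M B w
  | .just t A, w => M.E t A w ∧ ∀ v : M.World, M.R w v → Sat M A v

/-- The evidence relation of a model, as a set of triples. -/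
def EvSet (M : Model) : Set (Term × Formula × M.World) :=
  {x | M.E x.1 x.2.1 x.2.2}

/-- The graph of the valuation: the set `{(w, p) | w ∈ ν(p)}`. -/
def ValSet (M : Model) : Set (M.World × ℕ) :=
  {p | M.val p.2 p.1}

/-- Seriality of a relation: every world has a successor. -/
def Serial {W : Type} (R : W → W → Prop) : Prop := ∀ w : W, ∃ v : W, R w v

/-- Admissible evidence relation for the logics without the (j4) axiom:
closure under sum and application, and the constant specification condition
with iterated `!`. -/
def AdmissibleBang (CS : Set Formula) {W : Type}
    (E : Set (Term × Formula × W)) : Prop :=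
  (∀ (s t : Term) (A : Formula) (w : W),
      ((s, A, w) ∈ E ∨ (t, A, w) ∈ E) → (Term.sum s t, A, w) ∈ E) ∧
  (∀ (s t : Term) (A B : Formula) (w : W),
      (s, A.impl B, w) ∈ E → (t, A, w) ∈ E → (Term.app s t, B, w) ∈ E) ∧
  (∀ (c : ℕ) (A : Formula) (w : W) (n : ℕ),
      Formula.just (Term.const c) A ∈ CS →
      (towerT (Term.const c) n, towerF (Term.const c) A n, w) ∈ E)

/-- Admissible evidence relation for the logics with the (j4) axiom:
closure under sum and application, the simple constant specification condition,
closure under `!`, and monotonicity along the accessibility relation. -/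
def AdmissibleJ4 (CS : Set Formula) {W : Type} (R : W → W → Prop)
    (E : Set (Term × Formula × W)) : Prop :=
  (∀ (s t : Term) (A : Formula) (w : W),
      ((s, A, w) ∈ E ∨ (t, A, w) ∈ E) → (Term.sum s t, A, w) ∈ E) ∧
  (∀ (s t : Term) (A B : Formula) (w : W),
      (s, A.impl B, w) ∈ E → (t, A, w) ∈ E → (Term.app s t, B, w) ∈ E) ∧
  (∀ (c : ℕ) (A : Formula) (w : W),
      Formula.just (Term.const c) A ∈ CS → (Term.const c, A, w) ∈ E) ∧
  (∀ (t : Term) (A : Formula) (w : W),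
      (t, A, w) ∈ E → (Term.bang t, Formula.just t A, w) ∈ E) ∧
  (∀ (t : Term) (A : Formula) (w v : W),
      (t, A, w) ∈ E → R w v → (t, A, v) ∈ E)

/-- `M` is a Fitting model for `J_CS`. -/
def IsModelJ (CS : Set Formula) (M : Model) : Prop :=
  AdmissibleBang CS (EvSet M)

/-- `M` is a Fitting model for `JT_CS`: additionally `R` is reflexive. -/
def IsModelJT (CS : Set Formula) (M : Model) : Prop :=
  Reflexive M.R ∧ AdmissibleBang CS (EvSet M)

/-- `M` is a Fitting model for `JD_CS`: additionally `R` is serial. -/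
def IsModelJD (CS : Set Formula) (M : Model) : Prop :=
  Serial M.R ∧ AdmissibleBang CS (EvSet M)

/-- `M` is a Fitting model for `J4_CS`: `R` is transitive. -/
def IsModelJ4 (CS : Set Formula) (M : Model) : Prop :=
  Transitive M.R ∧ AdmissibleJ4 CS M.R (EvSet M)

/-- `M` is a Fitting model for `JD4_CS`: `R` is serial and transitive. -/
def IsModelJD4 (CS : Set Formula) (M : Model) : Prop :=
  Serial M.R ∧ Transitive M.R ∧ AdmissibleJ4 CS M.R (EvSet M)

/-- `M` is a Fitting model for `LP_CS`: `R` is reflexive and transitive. -/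
def IsModelLP (CS : Set Formula) (M : Model) : Prop :=
  Reflexive M.R ∧ Transitive M.R ∧ AdmissibleJ4 CS M.R (EvSet M)

/-- `B` is a base for the evidence relation of `M`, and that evidence relation is
minimal (least) among the admissible ones (non-(j4) version) containing `B`. -/
def MinBaseBang (CS : Set Formula) (M : Model)
    (B : Set (Term × Formula × M.World)) : Prop :=
  B ⊆ EvSet M ∧
  ∀ E' : Set (Term × Formula × M.World),
    AdmissibleBang CS E' → B ⊆ E' → EvSet M ⊆ E'

/-- `B` is a base for the evidence relation of `M`, and that evidence relation is
minimal (least) among the admissible ones ((j4) version) containing `B`. -/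
def MinBaseJ4 (CS : Set Formula) (M : Model)
    (B : Set (Term × Formula × M.World)) : Prop :=
  B ⊆ EvSet M ∧
  ∀ E' : Set (Term × Formula × M.World),
    AdmissibleJ4 CS M.R E' → B ⊆ E' → EvSet M ⊆ E'

/-- `M` is finitary (non-(j4) version): finitely many worlds, the evidence relation
is the minimal admissible one over some finite base, and the valuation has finite graph. -/
def FinitaryBang (CS : Set Formula) (M : Model) : Prop :=
  Finite M.World ∧
  (∃ B : Set (Term × Formula × M.World), B.Finite ∧ MinBaseBang CS M B) ∧
  (ValSet M).Finite

/-- `M` is finitary ((j4) version): finitely many worlds, the evidence relation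
is the minimal admissible one over some finite base, and the valuation has finite graph. -/
def FinitaryJ4 (CS : Set Formula) (M : Model) : Prop :=
  Finite M.World ∧
  (∃ B : Set (Term × Formula × M.World), B.Finite ∧ MinBaseJ4 CS M B) ∧
  (ValSet M).Finite

/-!
Canonical models, cut down to finitely many worlds. Extend `{¬A}` to a maximal consistent set
`Γ₀`. Because `CS` is axiomatically appropriate, every derivation from the justified part
`Γ♯ = {B | ∃ t, t:B ∈ Γ}` of a maximal consistent `Γ` lifts to a justification `t:B ∈ Γ`;
with (jd) this makes `Γ♯` consistent, so it extends to a maximal consistent `Γ₁`, and so on.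
The worlds are `0, …, d`, where `d` is the nesting depth of `:` in `A`, with `i R (i+1)` and a
loop at `d` for seriality; evidence is generated by the finitely many subformulas `t:B` of `A`
with `t:B ∈ Γᵢ`. A formula of depth `k` only looks `k` steps ahead, so the truth lemma holds for
subformulas `B` of `A` at worlds `i` with `depth B + i ≤ d`, where the loop is never reached.
-/

section Derivations

variable {jd jt j4 : Bool} {CS Γ Δ : Set Formula} {A B : Formula}

abbrev DerivFrom (jd jt j4 : Bool) (CS Γ : Set Formula) (A : Formula) : Prop :=
  DerivB (fun F => Ax jd jt j4 F ∨ F ∈ Γ) CS A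

namespace DerivFrom

theorem hyp (h : A ∈ Γ) : DerivFrom jd jt j4 CS Γ A := DerivB.ax (Or.inr h)

theorem ax (h : Ax jd jt j4 A) : DerivFrom jd jt j4 CS Γ A := DerivB.ax (Or.inl h)

theorem mp (h₁ : DerivFrom jd jt j4 CS Γ (A.impl B)) (h₂ : DerivFrom jd jt j4 CS Γ A) :
    DerivFrom jd jt j4 CS Γ B :=
  DerivB.mp h₁ h₂

theorem mono (hΓΔ : Γ ⊆ Δ) (h : DerivFrom jd jt j4 CS Γ A) : DerivFrom jd jt j4 CS Δ A := by
  induction h with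
  | ax h => exact h.elim ax fun h => hyp (hΓΔ h)
  | mp _ _ ih₁ ih₂ => exact ih₁.mp ih₂
  | an c B n hc => exact DerivB.an c B n hc

theorem derivB_of_empty (h : DerivFrom jd jt j4 CS ∅ A) : DerivB (Ax jd jt j4) CS A := by
  induction h with
  | ax h => exact DerivB.ax (h.resolve_right (Set.notMem_empty _))
  | mp _ _ ih₁ ih₂ => exact ih₁.mp ih₂
  | an c B n hc => exact DerivB.an c B n hc

theorem imp_self : DerivFrom jd jt j4 CS Γ (A.impl A) :=
  ((ax (Ax.s A (A.impl A) A)).mp (ax (Ax.k A (A.impl A)))).mp (ax (Ax.k A A))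

theorem deduction (h : DerivFrom jd jt j4 CS (insert A Γ) B) :
    DerivFrom jd jt j4 CS Γ (A.impl B) := by
  induction h with
  | ax h =>
    rcases h with h | rfl | h
    · exact (ax (Ax.k _ A)).mp (ax h)
    · exact imp_self
    · exact (ax (Ax.k _ A)).mp (hyp h)
  | mp _ _ ih₁ ih₂ => exact ((ax (Ax.s A _ _)).mp ih₁).mp ih₂
  | an c B n hc => exact (ax (Ax.k _ A)).mp (DerivB.an c B n hc)

theorem of_contra (h₁ : DerivFrom jd jt j4 CS Γ A) (h₂ : DerivFrom jd jt j4 CS Γ A.neg) :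
    DerivFrom jd jt j4 CS Γ B :=
  ((ax (Ax.dn B A)).mp ((ax (Ax.k A.neg B.neg)).mp h₂)).mp h₁

theorem of_neg_impl_falsum (h : DerivFrom jd jt j4 CS Γ (A.neg.impl Formula.falsum)) :
    DerivFrom jd jt j4 CS Γ A :=
  ((ax (Ax.dn A _)).mp h).mp imp_self

theorem exists_mem_of_sUnion {c : Set (Set Formula)} (hc : IsChain (· ⊆ ·) c)
    (hne : c.Nonempty) (h : DerivFrom jd jt j4 CS (⋃₀ c) A) :
    ∃ Γ ∈ c, DerivFrom jd jt j4 CS Γ A := by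
  induction h with
  | ax h =>
    rcases h with h | ⟨Γ, hΓ, hA⟩
    · exact ⟨hne.some, hne.some_mem, ax h⟩
    · exact ⟨Γ, hΓ, hyp hA⟩
  | mp _ _ ih₁ ih₂ =>
    obtain ⟨Γ₁, hΓ₁, h₁⟩ := ih₁
    obtain ⟨Γ₂, hΓ₂, h₂⟩ := ih₂
    obtain ⟨Γ, hΓ, hΓ₁Γ, hΓ₂Γ⟩ := hc.directedOn Γ₁ hΓ₁ Γ₂ hΓ₂
    exact ⟨Γ, hΓ, (h₁.mono hΓ₁Γ).mp (h₂.mono hΓ₂Γ)⟩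
  | an k B n hk => exact ⟨hne.some, hne.some_mem, DerivB.an k B n hk⟩

end DerivFrom

def Consistent (jd jt j4 : Bool) (CS Γ : Set Formula) : Prop :=
  ¬ DerivFrom jd jt j4 CS Γ Formula.falsum

def MaximalConsistent (jd jt j4 : Bool) (CS Γ : Set Formula) : Prop :=
  Maximal (Consistent jd jt j4 CS) Γ

theorem consistent_singleton_neg (hA : ¬ DerivB (Ax jd jt j4) CS A) :
    Consistent jd jt j4 CS {A.neg} := fun h =>
  hA (DerivFrom.of_neg_impl_falsum (DerivFrom.deduction (by simpa using h))).derivB_of_empty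

theorem exists_maximalConsistent_superset (h : Consistent jd jt j4 CS Γ) :
    ∃ Δ, Γ ⊆ Δ ∧ MaximalConsistent jd jt j4 CS Δ :=
  zorn_subset_nonempty {Δ | Consistent jd jt j4 CS Δ}
    (fun c hcons hc hne =>
      ⟨⋃₀ c, fun hderiv => by
        obtain ⟨Δ, hΔ, hΔderiv⟩ := hderiv.exists_mem_of_sUnion hc hne
        exact hcons hΔ hΔderiv,
      fun _ => Set.subset_sUnion_of_mem⟩)
    Γ h

namespace MaximalConsistent

theorem mem_of_derivFrom (hΓ : MaximalConsistent jd jt j4 CS Γ)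
    (h : DerivFrom jd jt j4 CS Γ A) : A ∈ Γ :=
  Maximal.mem_of_prop_insert hΓ fun hins => hΓ.1 (hins.deduction.mp h)

theorem ax_mem (hΓ : MaximalConsistent jd jt j4 CS Γ) (h : Ax jd jt j4 A) : A ∈ Γ :=
  hΓ.mem_of_derivFrom (DerivFrom.ax h)

theorem mp_mem (hΓ : MaximalConsistent jd jt j4 CS Γ) (hAB : A.impl B ∈ Γ) (hA : A ∈ Γ) :
    B ∈ Γ :=
  hΓ.mem_of_derivFrom ((DerivFrom.hyp hAB).mp (DerivFrom.hyp hA))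

theorem neg_mem_iff (hΓ : MaximalConsistent jd jt j4 CS Γ) : A.neg ∈ Γ ↔ A ∉ Γ :=
  ⟨fun hn hA => hΓ.1 ((DerivFrom.hyp hA).of_contra (DerivFrom.hyp hn)),
    fun hA => Maximal.mem_of_prop_insert hΓ fun hins =>
      hA (hΓ.mem_of_derivFrom (DerivFrom.of_neg_impl_falsum hins.deduction))⟩

theorem impl_mem_iff (hΓ : MaximalConsistent jd jt j4 CS Γ) :
    A.impl B ∈ Γ ↔ (A ∈ Γ → B ∈ Γ) := by
  refine ⟨hΓ.mp_mem, fun h => ?_⟩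
  by_cases hA : A ∈ Γ
  · exact hΓ.mp_mem (hΓ.ax_mem (Ax.k B A)) (h hA)
  · exact hΓ.mp_mem (hΓ.ax_mem (Ax.dn B A))
      (hΓ.mp_mem (hΓ.ax_mem (Ax.k A.neg B.neg)) (hΓ.neg_mem_iff.2 hA))

theorem or_mem_iff (hΓ : MaximalConsistent jd jt j4 CS Γ) : A.or B ∈ Γ ↔ A ∈ Γ ∨ B ∈ Γ := by
  rw [Formula.or, hΓ.impl_mem_iff, hΓ.neg_mem_iff, or_iff_not_imp_left]

end MaximalConsistent

end Derivations

section Justified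

variable {jd jt j4 : Bool} {CS Γ : Set Formula} {A : Formula}

def justified (Γ : Set Formula) : Set Formula := {B | ∃ t, Formula.just t B ∈ Γ}

theorem MaximalConsistent.exists_just_of_derivFrom (hApp : AxApprop (Ax jd jt j4) CS)
    (hΓ : MaximalConsistent jd jt j4 CS Γ) (h : DerivFrom jd jt j4 CS (justified Γ) A) :
    ∃ t, Formula.just t A ∈ Γ := by
  induction h with
  | ax h =>
    rcases h with h | h
    · obtain ⟨c, hc⟩ := hApp _ h
      exact ⟨Term.const c, hΓ.mem_of_derivFrom (DerivB.an c _ 0 hc)⟩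
    · exact h
  | @mp B C _ _ ih₁ ih₂ =>
    obtain ⟨s, hs⟩ := ih₁
    obtain ⟨u, hu⟩ := ih₂
    exact ⟨Term.app s u, hΓ.mp_mem (hΓ.mp_mem (hΓ.ax_mem (Ax.a2 s u B C)) hs) hu⟩
  | an c B n hc =>
    exact ⟨towerT (Term.const c) (n + 1), hΓ.mem_of_derivFrom (DerivB.an c B (n + 1) hc)⟩

theorem MaximalConsistent.consistent_justified (hApp : AxApprop (Ax true jt j4) CS)
    (hΓ : MaximalConsistent true jt j4 CS Γ) : Consistent true jt j4 CS (justified Γ) :=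
  fun h =>
    let ⟨t, ht⟩ := hΓ.exists_just_of_derivFrom hApp h
    hΓ.1 (DerivFrom.hyp (hΓ.mp_mem (hΓ.ax_mem (Ax.jd t rfl)) ht))

theorem exists_maximalConsistent_chain (hApp : AxApprop (Ax true jt j4) CS)
    (hΓ : MaximalConsistent true jt j4 CS Γ) :
    ∃ Γs : ℕ → Set Formula, Γs 0 = Γ ∧
      ∀ n, MaximalConsistent true jt j4 CS (Γs n) ∧ justified (Γs n) ⊆ Γs (n + 1) := by
  choose next hnext hmax using fun Δ : {Δ // MaximalConsistent true jt j4 CS Δ} =>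
    exists_maximalConsistent_superset (Δ.2.consistent_justified hApp)
  let step (Δ : {Δ // MaximalConsistent true jt j4 CS Δ}) :
      {Δ // MaximalConsistent true jt j4 CS Δ} := ⟨next Δ, hmax Δ⟩
  refine ⟨fun n => (step^[n] ⟨Γ, hΓ⟩).1, rfl, fun n => ⟨(step^[n] _).2, ?_⟩⟩
  show justified (step^[n] _).1 ⊆ (step^[n + 1] _).1
  rw [Function.iterate_succ_apply']
  exact hnext _

end Justified

section Evidence

variable {CS : Set Formula} {W : Type}

inductive EvClosure (CS : Set Formula) {W : Type} (base : Set (Term × Formula × W)) :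
    Set (Term × Formula × W)
  | base {x} : x ∈ base → EvClosure CS base x
  | sum_left {s t B w} : EvClosure CS base (s, B, w) → EvClosure CS base (Term.sum s t, B, w)
  | sum_right {s t B w} : EvClosure CS base (t, B, w) → EvClosure CS base (Term.sum s t, B, w)
  | app {s t B C w} : EvClosure CS base (s, B.impl C, w) → EvClosure CS base (t, B, w) →
      EvClosure CS base (Term.app s t, C, w)
  | an {c B w} (n : ℕ) : Formula.just (Term.const c) B ∈ CS →
      EvClosure CS base (towerT (Term.const c) n, towerF (Term.const c) B n, w)

theorem admissibleBang_evClosure (base : Set (Term × Formula × W)) :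
    AdmissibleBang CS (EvClosure CS base) :=
  ⟨fun _ _ _ _ h => h.elim .sum_left .sum_right, fun _ _ _ _ _ => .app,
    fun _ _ _ n hc => .an n hc⟩

theorem evClosure_subset {base E : Set (Term × Formula × W)} (hE : AdmissibleBang CS E)
    (hbase : base ⊆ E) : EvClosure CS base ⊆ E := by
  intro x hx
  induction hx with
  | base h => exact hbase h
  | sum_left _ ih => exact hE.1 _ _ _ _ (Or.inl ih)
  | sum_right _ ih => exact hE.1 _ _ _ _ (Or.inr ih)
  | app _ _ ih₁ ih₂ => exact hE.2.1 _ _ _ _ _ ih₁ ih₂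
  | an n hc => exact hE.2.2 _ _ _ n hc

theorem admissibleBang_of_maximalConsistent {jd jt j4 : Bool} {Γs : W → Set Formula}
    (hΓs : ∀ w, MaximalConsistent jd jt j4 CS (Γs w)) :
    AdmissibleBang CS {x : Term × Formula × W | Formula.just x.1 x.2.1 ∈ Γs x.2.2} := by
  refine ⟨fun s t B w h => ?_, fun s t B C w hs ht => ?_, fun c B w n hc => ?_⟩
  · exact (hΓs w).mp_mem ((hΓs w).ax_mem (Ax.a3 s t B)) ((hΓs w).or_mem_iff.2 h)
  · exact (hΓs w).mp_mem ((hΓs w).mp_mem ((hΓs w).ax_mem (Ax.a2 s t B C)) hs) ht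
  · exact (hΓs w).mem_of_derivFrom (DerivB.an c B n hc)

end Evidence

def Formula.depth : Formula → ℕ
  | .atom _ => 0
  | .neg B => B.depth
  | .impl B C => max B.depth C.depth
  | .just _ B => B.depth + 1

def Formula.subformulas : Formula → Finset Formula
  | .atom n => {.atom n}
  | .neg B => insert (.neg B) B.subformulas
  | .impl B C => insert (.impl B C) (B.subformulas ∪ C.subformulas)
  | .just t B => insert (.just t B) B.subformulas

section ChainModel

variable {CS : Set Formula} {Γs : ℕ → Set Formula} {A : Formula}

def chainBase (Γs : ℕ → Set Formula) (A : Formula) : Set (Term × Formula × Fin (A.depth + 1)) :=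
  {x | Formula.just x.1 x.2.1 ∈ A.subformulas ∧ Formula.just x.1 x.2.1 ∈ Γs x.2.2}

def chainModel (CS : Set Formula) (Γs : ℕ → Set Formula) (A : Formula) : Model where
  World := Fin (A.depth + 1)
  nonempty := ⟨0⟩
  R i j := j.val = min (i.val + 1) A.depth
  E t B i := (t, B, i) ∈ EvClosure CS (chainBase Γs A)
  val n i := Formula.atom n ∈ A.subformulas ∧ Formula.atom n ∈ Γs i

theorem chainModel_isModelJD : IsModelJD CS (chainModel CS Γs A) :=
  ⟨fun i => ⟨⟨min (i.val + 1) A.depth, by omega⟩, rfl⟩, admissibleBang_evClosure _⟩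

theorem chainBase_finite : (chainBase Γs A).Finite := by
  have hinj : Function.Injective
      fun x : Term × Formula × Fin (A.depth + 1) => (Formula.just x.1 x.2.1, x.2.2) := by
    rintro ⟨t, B, i⟩ ⟨t', B', i'⟩ h
    simp_all
  exact ((A.subformulas.finite_toSet.prod Set.finite_univ).preimage hinj.injOn).subset
    fun x hx => ⟨hx.1, Set.mem_univ _⟩

theorem valSet_chainModel_finite : (ValSet (chainModel CS Γs A)).Finite := by
  have hinj : Function.Injective Formula.atom := fun _ _ h => Formula.atom.inj h
  exact ((Set.finite_univ (α := Fin (A.depth + 1))).prod (A.subformulas.finite_toSet.preimage hinj.injOn)).subset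
    fun p hp => ⟨Set.mem_univ _, hp.1⟩

theorem chainModel_finitary : FinitaryBang CS (chainModel CS Γs A) :=
  ⟨inferInstanceAs (Finite (Fin _)),
    ⟨chainBase Γs A, chainBase_finite, fun _ => EvClosure.base,
      fun _ hE hbase => evClosure_subset hE hbase⟩,
    valSet_chainModel_finite⟩

end ChainModel

section TruthLemma

variable {jd jt j4 : Bool} {CS : Set Formula} {Γs : ℕ → Set Formula} {A : Formula}

theorem mem_of_chainModel_E (hΓs : ∀ n, MaximalConsistent jd jt j4 CS (Γs n)) {t : Term}
    {B : Formula} {i : Fin (A.depth + 1)} (h : (chainModel CS Γs A).E t B i) :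
    Formula.just t B ∈ Γs i :=
  evClosure_subset (admissibleBang_of_maximalConsistent fun i : Fin (A.depth + 1) => hΓs i)
    (fun _ hx => hx.2) h

theorem sat_chainModel_iff (hΓs : ∀ n, MaximalConsistent jd jt j4 CS (Γs n))
    (hjust : ∀ n, justified (Γs n) ⊆ Γs (n + 1)) (B : Formula) (i : Fin (A.depth + 1))
    (hB : B.subformulas ⊆ A.subformulas) (hi : B.depth + i ≤ A.depth) :
    Sat (chainModel CS Γs A) B i ↔ B ∈ Γs i := by
  induction B generalizing i with
  | atom n => exact ⟨And.right, fun h => ⟨hB (Finset.mem_singleton_self _), h⟩⟩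
  | neg B ih =>
    show ¬ _ ↔ _
    rw [ih i ((Finset.subset_insert _ _).trans hB) hi, (hΓs i).neg_mem_iff]
  | impl B C ihB ihC =>
    have hBC : B.subformulas ∪ C.subformulas ⊆ A.subformulas := (Finset.subset_insert _ _).trans hB
    simp only [Formula.depth] at hi
    show (_ → _) ↔ _
    rw [ihB i (Finset.union_subset_left hBC) (by omega),
      ihC i (Finset.union_subset_right hBC) (by omega), (hΓs i).impl_mem_iff]
  | just t B ih =>
    simp only [Formula.depth] at hi
    refine ⟨fun h => mem_of_chainModel_E hΓs h.1,
      fun h => ⟨EvClosure.base ⟨hB (Finset.mem_insert_self _ _), h⟩, fun v hv => ?_⟩⟩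
    have hv : v.val = i.val + 1 := by
      change v.val = min (i.val + 1) A.depth at hv
      omega
    refine (ih v ((Finset.subset_insert _ _).trans hB) (by omega)).2 ?_
    rw [hv]
    exact hjust i ⟨t, h⟩

end TruthLemma

theorem finitary_completeness_JD_general (CS : Set Formula) (hApp : AxApprop AxJD CS) (A : Formula)
    (hA : ¬ DerivB AxJD CS A) :
    ∃ M : Model, IsModelJD CS M ∧ FinitaryBang CS M ∧ ∃ w : M.World, ¬ Sat M A w := by
  obtain ⟨Γ, hAΓ, hΓ⟩ := exists_maximalConsistent_superset (consistent_singleton_neg hA)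
  obtain ⟨Γs, rfl, hΓs⟩ := exists_maximalConsistent_chain hApp hΓ
  refine ⟨chainModel CS Γs A, chainModel_isModelJD, chainModel_finitary, (0 : Fin (A.depth + 1)), fun hsat => ?_⟩
  have hA₀ : A ∈ Γs 0 := (sat_chainModel_iff (fun n => (hΓs n).1) (fun n => (hΓs n).2) A 0
    subset_rfl (by simp)).1 hsat
  exact hΓ.neg_mem_iff.1 (hAΓ rfl) hA₀

/-- Completeness of `JD_CS` with respect to finitary models: if a formula is not
derivable in the Hilbert system `JD_CS` (with axiomatically appropriate constant specification `CS`),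
then it fails at some world of some finitary Fitting model for `JD_CS`. -/
theorem finitary_completeness_JD (CS : Set Formula) (hCS : ConstSpec AxJD CS) (hApp : AxApprop AxJD CS) (A : Formula)
    (hA : ¬ DerivB AxJD CS A) :
    ∃ M : Model, IsModelJD CS M ∧ FinitaryBang CS M ∧ ∃ w : M.World, ¬ Sat M A w :=
  finitary_completeness_JD_general CS hApp A hA

end JustificationLogic
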